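/- Mod 2 Milnor K-theory of F vanishes in degrees at least 3: for every n ≥ 3 and every a₁, …, aₙ ∈ F^×, the product {a₁}·{a₂}⋯{aₙ} is zero in k^M(F). -/

import Mathlib

/-- A nondyadic `p`-adic field packaged as data: a field `F` of characteristic zero,
complete with respect to a surjective discrete valuation `v : Fˣ → ℤ`, with valuation
ring `O`, residue field `K` (finite of odd cardinality in applications), and residue
(quotient) map `res : O →+* K` whose kernel is the maximal ideal `𝔪 = {x : v x ≥ 1}`. -/
structure PadicData (F K : Type) [Field F] [Field K] where
  v : Fˣ → ℤ
  v_mul : ∀ x y : Fˣ, v (x * y) = v x + v y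
  v_surj : Function.Surjective v
  v_ultra : ∀ (x y : Fˣ) (h : (x : F) + (y : F) ≠ 0),
      min (v x) (v y) ≤ v (Units.mk0 ((x : F) + (y : F)) h)
  O : Subring F
  mem_O : ∀ x : F, x ∈ O ↔ ∀ h : x ≠ 0, 0 ≤ v (Units.mk0 x h)
  res : O →+* K
  res_surj : Function.Surjective res
  res_eq_zero : ∀ x : O, res x = 0 ↔ ∀ h : (x : F) ≠ 0, 1 ≤ v (Units.mk0 (x : F) h)
  complete : ∀ f : ℕ → F,
      (∀ N : ℤ, ∃ M : ℕ, ∀ m, M ≤ m → ∀ n, M ≤ n → ∀ h : f m - f n ≠ 0,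
        N ≤ v (Units.mk0 (f m - f n) h)) →
      ∃ a : F, ∀ N : ℤ, ∃ M : ℕ, ∀ n, M ≤ n → ∀ h : f n - a ≠ 0,
        N ≤ v (Units.mk0 (f n - a) h)
/-- The defining relations of mod 2 Milnor K-theory on the tensor algebra
`T(F^×)` (over `ℤ`, with `F^×` written additively): the Steinberg elements
`{a}·{1−a}` for `a ∈ F^× \ {1}` are set to `0`, and `2·1` is set to `0`.
Quotienting by `MilnorRel` realizes the quotient by the two-sided ideal `J`
generated by these elements. -/
inductive MilnorRel (F : Type) [Field F] :
    TensorAlgebra ℤ (Additive Fˣ) → TensorAlgebra ℤ (Additive Fˣ) → Prop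
  | steinberg (a : Fˣ) (h : (1 : F) - (a : F) ≠ 0) :
      MilnorRel F
        (TensorAlgebra.ι ℤ (Additive.ofMul a) *
          TensorAlgebra.ι ℤ (Additive.ofMul (Units.mk0 ((1 : F) - (a : F)) h))) 0
  | mod2 : MilnorRel F (2 : TensorAlgebra ℤ (Additive Fˣ)) 0

/-- Mod 2 Milnor K-theory `k^M(F) = T(F^×)/J`. -/
abbrev MilnorK (F : Type) [Field F] := RingQuot (MilnorRel F)

/-- The degree-one class `{a}` of `a ∈ F^×` in mod 2 Milnor K-theory. -/
noncomputable def kcls {F : Type} [Field F] (a : Fˣ) : MilnorK F :=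
  RingQuot.mkRingHom (MilnorRel F) (TensorAlgebra.ι ℤ (Additive.ofMul a))

/-!
Write `a = π ^ v(a) * u` with `π` a uniformizer and `u` a unit, so that
`{a} = v(a) • {π} + {u}`. Since `q` is odd, Newton's iteration for square roots converges, so a
unit is a square as soon as its residue is. Hence `{u}` only depends on the square class of the
residue of `u`, and there are two such classes; as `-1` is a sum of two squares in `𝔽`, this gives
`{u} * {u'} = 0` for all units. Together with `{π} * {π} = {π} * {-1}` and commutativity, every
`{a} * {b}` is `{π} * {w}` for a unit `w`, and `{π} * {w} * {c} = 0`.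
-/

namespace MilnorK

variable {F : Type} [Field F]

theorem two_eq_zero : (2 : MilnorK F) = 0 := by
  simpa only [map_ofNat, map_zero] using RingQuot.mkRingHom_rel (MilnorRel.mod2 (F := F))

theorem add_self_eq_zero (x : MilnorK F) : x + x = 0 := by
  rw [← two_mul, two_eq_zero, zero_mul]

theorem neg_eq_self (x : MilnorK F) : -x = x :=
  neg_eq_of_add_eq_zero_left (add_self_eq_zero x)

end MilnorK

section kcls

variable {F : Type} [Field F]

theorem kcls_mul (a b : Fˣ) : kcls (a * b) = kcls a + kcls b := by
  simp only [kcls, ofMul_mul, map_add]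

theorem kcls_zpow (a : Fˣ) (n : ℤ) : kcls (a ^ n) = n • kcls a := by
  simp only [kcls, ofMul_zpow, map_zsmul]

theorem kcls_one : kcls (1 : Fˣ) = 0 := by
  simp only [kcls, ofMul_one, map_zero]

theorem kcls_inv (a : Fˣ) : kcls a⁻¹ = kcls a := by
  simp only [kcls, ofMul_inv, map_neg, MilnorK.neg_eq_self]

theorem kcls_eq_zero_of_isSquare {a : Fˣ} (h : IsSquare a) : kcls a = 0 := by
  obtain ⟨r, rfl⟩ := h
  rw [kcls_mul, MilnorK.add_self_eq_zero]

theorem kcls_mul_kcls_eq_zero_of_add_eq_one {a b : Fˣ} (h : (a : F) + b = 1) :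
    kcls a * kcls b = 0 := by
  have hb' : (b : F) = 1 - a := by linear_combination h
  have hb : b = Units.mk0 (1 - (a : F)) (hb' ▸ b.ne_zero) := Units.ext hb'
  rw [hb]
  simpa [kcls] using RingQuot.mkRingHom_rel (MilnorRel.steinberg a _)

theorem kcls_mul_kcls_neg (a : Fˣ) : kcls a * kcls (-a) = 0 := by
  by_cases ha : (a : F) = 1
  · rw [show a = 1 from Units.ext ha, kcls_one, zero_mul]
  have h₁ : 1 - (a : F) ≠ 0 := sub_ne_zero.mpr (Ne.symm ha)
  have h₂ : 1 - (a⁻¹ : F) ≠ 0 := sub_ne_zero.mpr (Ne.symm (inv_ne_one.mpr ha))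
  have hneg : -a = Units.mk0 _ h₁ * (Units.mk0 _ h₂)⁻¹ := by
    rw [eq_mul_inv_iff_mul_eq]
    ext
    simp only [Units.val_mul, Units.val_neg, Units.val_mk0]
    field_simp
    ring
  have s₁ := kcls_mul_kcls_eq_zero_of_add_eq_one (a := a) (b := Units.mk0 _ h₁) (by simp)
  have s₂ := kcls_mul_kcls_eq_zero_of_add_eq_one (a := a⁻¹) (b := Units.mk0 _ h₂) (by simp)
  rw [kcls_inv] at s₂
  rw [hneg, kcls_mul, kcls_inv, mul_add, s₁, s₂, add_zero]

theorem kcls_mul_self (a : Fˣ) : kcls a * kcls a = kcls a * kcls (-1) := by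
  have h := kcls_mul_kcls_neg a
  rw [← neg_one_mul, kcls_mul, mul_add, add_eq_zero_iff_eq_neg, MilnorK.neg_eq_self] at h
  exact h.symm

theorem kcls_mul_comm (a b : Fˣ) : kcls a * kcls b = kcls b * kcls a := by
  have h := kcls_mul_kcls_neg (a * b)
  rw [show -(a * b) = a * (-1 * b) by simp, kcls_mul, kcls_mul, kcls_mul] at h
  have expand : (kcls a + kcls b) * (kcls a + (kcls (-1) + kcls b)) =
      (kcls a * kcls a + kcls a * kcls (-1)) + (kcls a * kcls b + kcls b * kcls a) +
        (kcls b * kcls (-1) + kcls b * kcls b) := by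
    noncomm_ring
  rwa [expand, kcls_mul_self a, kcls_mul_self b, MilnorK.add_self_eq_zero,
    MilnorK.add_self_eq_zero, zero_add, add_zero, add_eq_zero_iff_eq_neg,
    MilnorK.neg_eq_self] at h

theorem kcls_neg_one_mul_self_of_sq_add_sq {x y : Fˣ} (h : (x : F) ^ 2 + (y : F) ^ 2 = -1) :
    kcls (-1 : Fˣ) * kcls (-1 : Fˣ) = 0 := by
  have hsq : ∀ z : Fˣ, kcls (-(z * z)) = kcls (-1 : Fˣ) := fun z => by
    rw [← neg_one_mul, kcls_mul, kcls_eq_zero_of_isSquare ⟨z, rfl⟩, add_zero]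
  have h' := kcls_mul_kcls_eq_zero_of_add_eq_one (a := -(x * x)) (b := -(y * y))
    (by push_cast; linear_combination -h)
  rwa [hsq, hsq] at h'

end kcls

theorem FiniteField.isSquare_mul_of_not_isSquare {K : Type} [Field K] [Fintype K] {a b : K}
    (ha : ¬IsSquare a) (hb : ¬IsSquare b) : IsSquare (a * b) := by
  classical
  have ha0 : a ≠ 0 := by rintro rfl; exact ha ⟨0, by simp⟩
  have hb0 : b ≠ 0 := by rintro rfl; exact hb ⟨0, by simp⟩
  rw [← quadraticChar_neg_one_iff_not_isSquare] at ha hb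
  rw [← quadraticChar_one_iff_isSquare (mul_ne_zero ha0 hb0), map_mul, ha, hb]
  norm_num

section Newton

variable {F : Type} [Field F] {v : AddValuation F (WithTop ℤ)}

noncomputable def newtonSqrt (w x : F) : F := (x + w / x) / 2

theorem val_newtonSqrt_sub {w x : F} (h2 : v 2 = 0) (hx : v x = 0) :
    v (newtonSqrt w x - x) = v (x ^ 2 - w) := by
  have hx0 : x ≠ 0 := v.ne_top_iff.mp (by simp [hx])
  have h20 : (2 : F) ≠ 0 := v.ne_top_iff.mp (by simp [h2])
  have key : (newtonSqrt w x - x) * (2 * x) = w - x ^ 2 := by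
    unfold newtonSqrt; field_simp; ring
  rw [v.map_sub_swap (x ^ 2) w]
  simpa [v.map_mul, h2, hx] using congrArg v key

theorem val_newtonSqrt_sq_sub {w x : F} (h2 : v 2 = 0) (hx : v x = 0) :
    v (newtonSqrt w x ^ 2 - w) = v (x ^ 2 - w) + v (x ^ 2 - w) := by
  have hx0 : x ≠ 0 := v.ne_top_iff.mp (by simp [hx])
  have h20 : (2 : F) ≠ 0 := v.ne_top_iff.mp (by simp [h2])
  have key : (newtonSqrt w x ^ 2 - w) * ((2 * x) * (2 * x)) = (x ^ 2 - w) * (x ^ 2 - w) := by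
    unfold newtonSqrt; field_simp; ring
  simpa [v.map_mul, h2, hx] using congrArg v key

theorem newtonSqrt_iterate_spec {w x₀ : F} (h2 : v 2 = 0) (hx₀ : v x₀ = 0)
    (he₀ : 1 ≤ v (x₀ ^ 2 - w)) (n : ℕ) :
    v ((newtonSqrt w)^[n] x₀) = 0 ∧
      ((n + 1 : ℤ) : WithTop ℤ) ≤ v ((newtonSqrt w)^[n] x₀ ^ 2 - w) := by
  induction n with
  | zero => simpa using ⟨hx₀, he₀⟩
  | succ n ih =>
    obtain ⟨hx, he⟩ := ih
    set x := (newtonSqrt w)^[n] x₀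
    have hstep : v (newtonSqrt w x - x) = v (x ^ 2 - w) := val_newtonSqrt_sub h2 hx
    have hpos : (0 : WithTop ℤ) < v (x ^ 2 - w) :=
      lt_of_lt_of_le (by exact_mod_cast (by omega : (0 : ℤ) < n + 1)) he
    rw [Function.iterate_succ_apply']
    refine ⟨?_, ?_⟩
    · rw [← add_sub_cancel x (newtonSqrt w x), v.map_add_eq_of_lt_left (by rwa [hx, hstep]), hx]
    · rw [val_newtonSqrt_sq_sub h2 hx]
      have he₁ : ((1 : ℤ) : WithTop ℤ) ≤ v (x ^ 2 - w) :=
        le_trans (by exact_mod_cast (by omega : (1 : ℤ) ≤ n + 1)) he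
      exact_mod_cast add_le_add he he₁

theorem le_val_newtonSqrt_iterate_sub {w x₀ : F} (h2 : v 2 = 0) (hx₀ : v x₀ = 0)
    (he₀ : 1 ≤ v (x₀ ^ 2 - w)) {m n : ℕ} (hnm : n ≤ m) :
    ((n + 1 : ℤ) : WithTop ℤ) ≤ v ((newtonSqrt w)^[m] x₀ - (newtonSqrt w)^[n] x₀) := by
  induction m, hnm using Nat.le_induction with
  | base => simp
  | succ m hnm ih =>
    obtain ⟨hx, he⟩ := newtonSqrt_iterate_spec h2 hx₀ he₀ m
    rw [← sub_add_sub_cancel _ ((newtonSqrt w)^[m] x₀), Function.iterate_succ_apply']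
    refine v.map_le_add ?_ ih
    rw [val_newtonSqrt_sub h2 hx]
    exact le_trans (by exact_mod_cast (by omega : (n : ℤ) + 1 ≤ m + 1)) he

theorem newtonSqrt_iterate_cauchy {w x₀ : F} (h2 : v 2 = 0) (hx₀ : v x₀ = 0)
    (he₀ : 1 ≤ v (x₀ ^ 2 - w)) (N : ℤ) : ∃ M : ℕ, ∀ m ≥ M, ∀ n ≥ M,
      (N : WithTop ℤ) ≤ v ((newtonSqrt w)^[m] x₀ - (newtonSqrt w)^[n] x₀) := by
  refine ⟨N.toNat, fun m hm n hn => ?_⟩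
  have hN : N ≤ min m n + 1 := by omega
  wlog hnm : n ≤ m generalizing m n
  · rw [v.map_sub_swap]
    exact this n hn m hm (by omega) (le_of_not_ge hnm)
  exact le_trans (by exact_mod_cast hN.trans (by omega))
    (le_val_newtonSqrt_iterate_sub h2 hx₀ he₀ hnm)

theorem le_val_sq_sub {a x w : F} {N : ℤ} (hN : 0 ≤ N) (h2 : v 2 = 0) (hx : v x = 0)
    (ha : N ≤ v (a - x)) (he : N ≤ v (x ^ 2 - w)) : N ≤ v (a ^ 2 - w) := by
  have h2x : v (2 * x) = 0 := by rw [v.map_mul, h2, hx, add_zero]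
  have hsum : 0 ≤ v (a - x + 2 * x) :=
    v.map_le_add (le_trans (by exact_mod_cast hN) ha) h2x.ge
  rw [show a ^ 2 - w = (a - x) * (a - x + 2 * x) + (x ^ 2 - w) by ring]
  refine v.map_le_add ?_ he
  rw [v.map_mul, ← add_zero (N : WithTop ℤ)]
  exact add_le_add ha hsum

theorem sq_eq_of_forall_le_val_newtonSqrt_iterate_sub {w x₀ a : F} (h2 : v 2 = 0)
    (hx₀ : v x₀ = 0) (he₀ : 1 ≤ v (x₀ ^ 2 - w))
    (ha : ∀ N : ℤ, ∃ M : ℕ, ∀ n ≥ M, (N : WithTop ℤ) ≤ v ((newtonSqrt w)^[n] x₀ - a)) :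
    a ^ 2 = w := by
  rw [← sub_eq_zero, ← v.top_iff, WithTop.eq_top_iff_forall_ge]
  intro N
  obtain ⟨M, hM⟩ := ha (max N 0)
  set n := max M N.toNat
  obtain ⟨hx, he⟩ := newtonSqrt_iterate_spec h2 hx₀ he₀ n
  refine le_trans (by exact_mod_cast le_max_left N 0)
    (le_val_sq_sub (le_max_right N 0) h2 hx ?_ ?_)
  · rw [v.map_sub_swap]
    exact hM n (le_max_left _ _)
  · exact le_trans (by exact_mod_cast (by omega : max N 0 ≤ n + 1)) he

end Newton

namespace PadicData

section

variable {F K : Type} [Field F] [Field K] (D : PadicData F K)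

theorem v_one : D.v 1 = 0 := by
  simpa using D.v_mul 1 1

theorem v_neg_one : D.v (-1) = 0 := by
  have h := D.v_mul (-1) (-1)
  rw [neg_one_mul, neg_neg, v_one] at h
  omega

theorem v_zpow (a : Fˣ) (n : ℤ) : D.v (a ^ n) = n * D.v a := by
  let vHom : Additive Fˣ →+ ℤ := AddMonoidHom.mk' (fun a => D.v a.toMul) fun a b => D.v_mul _ _
  simpa [vHom] using vHom.map_zsmul n (Additive.ofMul a)

open Classical in
noncomputable def val : AddValuation F (WithTop ℤ) :=
  AddValuation.of (fun x => if h : x = 0 then ⊤ else (D.v (Units.mk0 x h) : WithTop ℤ))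
    (by simp)
    (by simpa using D.v_one)
    (fun x y => by
      by_cases hx : x = 0
      · simp [hx]
      by_cases hy : y = 0
      · simp [hy]
      by_cases hxy : x + y = 0
      · simp [hxy]
      rw [dif_neg hx, dif_neg hy, dif_neg hxy, ← WithTop.coe_min, WithTop.coe_le_coe]
      exact D.v_ultra (Units.mk0 x hx) (Units.mk0 y hy) hxy)
    (fun x y => by
      by_cases hx : x = 0
      · simp [hx]
      by_cases hy : y = 0
      · simp [hy]
      rw [dif_neg hx, dif_neg hy, dif_neg (mul_ne_zero hx hy), ← WithTop.coe_add, ← D.v_mul,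
        Units.mk0_mul])

theorem val_of_ne_zero {x : F} (hx : x ≠ 0) : D.val x = D.v (Units.mk0 x hx) := by
  simp [val, AddValuation.of_apply, hx]

theorem val_units (a : Fˣ) : D.val a = D.v a := by
  rw [D.val_of_ne_zero a.ne_zero, Units.mk0_val]

theorem coe_le_val_iff (N : ℤ) (x : F) :
    (N : WithTop ℤ) ≤ D.val x ↔ ∀ h : x ≠ 0, N ≤ D.v (Units.mk0 x h) := by
  by_cases hx : x = 0
  · simp [hx]
  · simp [hx, D.val_of_ne_zero hx]

theorem mem_O_iff_val (x : F) : x ∈ D.O ↔ 0 ≤ D.val x := by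
  rw [D.mem_O, ← WithTop.coe_zero, coe_le_val_iff]

theorem res_eq_zero_iff_val (x : D.O) : D.res x = 0 ↔ 1 ≤ D.val x := by
  rw [D.res_eq_zero, ← WithTop.coe_one, coe_le_val_iff]

theorem val_eq_zero_of_res_ne_zero {x : D.O} (hx : D.res x ≠ 0) : D.val x = 0 := by
  have h₀ := (D.mem_O_iff_val x).mp x.2
  have h₁ := mt (D.res_eq_zero_iff_val x).mpr hx
  obtain ⟨c, hc⟩ := WithTop.ne_top_iff_exists.mp (ne_top_of_lt (not_le.mp h₁))
  rw [← hc] at h₀ h₁ ⊢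
  norm_cast at h₀ h₁ ⊢
  omega

theorem exists_limit_of_cauchy (f : ℕ → F)
    (hf : ∀ N : ℤ, ∃ M : ℕ, ∀ m ≥ M, ∀ n ≥ M, (N : WithTop ℤ) ≤ D.val (f m - f n)) :
    ∃ a : F, ∀ N : ℤ, ∃ M : ℕ, ∀ n ≥ M, (N : WithTop ℤ) ≤ D.val (f n - a) := by
  simp only [coe_le_val_iff] at hf ⊢
  exact D.complete f hf

theorem val_two (hK : ringChar K ≠ 2) : D.val 2 = 0 :=
  D.val_eq_zero_of_res_ne_zero (x := 2) (by rw [map_ofNat]; exact Ring.two_ne_zero hK)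

theorem coe_ne_zero_of_res_ne_zero {x : D.O} (hx : D.res x ≠ 0) : (x : F) ≠ 0 :=
  D.val.ne_top_iff.mp (by rw [D.val_eq_zero_of_res_ne_zero hx]; simp)

theorem isSquare_of_isSquare_res (hK : ringChar K ≠ 2) {w : D.O} (hw : D.res w ≠ 0)
    (hsq : IsSquare (D.res w)) : IsSquare (w : F) := by
  obtain ⟨r, hr⟩ := hsq
  obtain ⟨x₀, rfl⟩ := D.res_surj r
  have hx₀ : D.val x₀ = 0 := D.val_eq_zero_of_res_ne_zero fun h => hw (by rw [hr, h, mul_zero])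
  have he₀ : 1 ≤ D.val ((x₀ : F) ^ 2 - w) := by
    have hres : D.res (x₀ * x₀ - w) = 0 := by rw [map_sub, map_mul, hr, sub_self]
    simpa [sq] using (D.res_eq_zero_iff_val _).mp hres
  have h2 := D.val_two hK
  obtain ⟨a, ha⟩ := D.exists_limit_of_cauchy _ (newtonSqrt_iterate_cauchy h2 hx₀ he₀)
  exact ⟨a, by rw [← sq_eq_of_forall_le_val_newtonSqrt_iterate_sub h2 hx₀ he₀ ha, sq]⟩

theorem mem_O_of_v_eq_zero {u : Fˣ} (hu : D.v u = 0) : (u : F) ∈ D.O := by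
  rw [mem_O_iff_val, val_units, hu, WithTop.coe_zero]

noncomputable def unitRes (u : Fˣ) (hu : D.v u = 0) : K :=
  D.res ⟨u, D.mem_O_of_v_eq_zero hu⟩

end

theorem exists_sq_add_sq_eq_neg_one {F K : Type} [Field F] [Field K] [Finite K]
    (D : PadicData F K) (hK : ringChar K ≠ 2)
    (hsq : ¬IsSquare (-1 : K)) : ∃ x y : Fˣ, (x : F) ^ 2 + (y : F) ^ 2 = -1 := by
  have : NeZero (ringChar K) := ⟨CharP.ringChar_ne_zero_of_finite K⟩
  obtain ⟨a, b, hab⟩ := CharP.sq_add_sq K (ringChar K) (-1)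
  push_cast at hab
  have ha : (a : K) ≠ 0 := fun h => hsq ⟨b, by rw [← hab, h]; ring⟩
  have hb : (b : K) ≠ 0 := fun h => hsq ⟨a, by rw [← hab, h]; ring⟩
  obtain ⟨y, hy⟩ := D.res_surj b
  have hy₀ : (y : F) ≠ 0 := D.coe_ne_zero_of_res_ne_zero (hy ▸ hb)
  have hw : D.res (-1 - y * y) = a * a := by
    rw [map_sub, map_neg, map_one, map_mul, hy]
    linear_combination -hab
  have hw₀ : D.res (-1 - y * y) ≠ 0 := hw ▸ mul_ne_zero ha ha
  obtain ⟨x, hx⟩ := D.isSquare_of_isSquare_res hK hw₀ ⟨a, hw⟩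
  have hx₀ : x ≠ 0 := left_ne_zero_of_mul (hx ▸ D.coe_ne_zero_of_res_ne_zero hw₀)
  exact ⟨Units.mk0 x hx₀, Units.mk0 y hy₀, by
    push_cast at hx
    simp only [Units.val_mk0]
    linear_combination -hx⟩

section

variable {F K : Type} [Field F] [Field K] {D : PadicData F K}

theorem unitRes_ne_zero {u : Fˣ} (hu : D.v u = 0) : D.unitRes u hu ≠ 0 := by
  rw [unitRes, Ne, res_eq_zero_iff_val]
  simp [val_units, hu]

theorem unitRes_mul {u u' : Fˣ} (hu : D.v u = 0) (hu' : D.v u' = 0) :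
    D.unitRes (u * u') (by rw [D.v_mul, hu, hu', add_zero]) =
      D.unitRes u hu * D.unitRes u' hu' := by
  rw [unitRes, unitRes, unitRes, ← map_mul]
  rfl

theorem unitRes_neg_one : D.unitRes (-1) D.v_neg_one = -1 := by
  rw [unitRes, ← map_one D.res, ← map_neg]
  rfl

theorem kcls_eq_zero_of_isSquare_unitRes (hK : ringChar K ≠ 2) {u : Fˣ} (hu : D.v u = 0)
    (hsq : IsSquare (D.unitRes u hu)) : kcls u = 0 := by
  obtain ⟨s, hs⟩ := D.isSquare_of_isSquare_res hK (unitRes_ne_zero hu) hsq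
  have hs₀ : s ≠ 0 := by
    rintro rfl
    exact u.ne_zero (by simp at hs)
  exact kcls_eq_zero_of_isSquare ⟨Units.mk0 s hs₀, Units.ext hs⟩

theorem exists_kcls_eq_zsmul_add {π : Fˣ} (hπ : D.v π = 1) (a : Fˣ) :
    ∃ u : Fˣ, D.v u = 0 ∧ kcls a = D.v a • kcls π + kcls u := by
  refine ⟨π ^ (-D.v a) * a, by rw [D.v_mul, D.v_zpow, hπ]; ring, ?_⟩
  rw [kcls_mul, kcls_zpow, ← add_assoc, ← add_smul, add_neg_cancel, zero_smul, zero_add]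

variable [Fintype K]

theorem kcls_eq_of_not_isSquare_unitRes (hK : ringChar K ≠ 2) {u u' : Fˣ}
    (hu : D.v u = 0) (hu' : D.v u' = 0) (hsq : ¬IsSquare (D.unitRes u hu))
    (hsq' : ¬IsSquare (D.unitRes u' hu')) : kcls u = kcls u' := by
  have h := kcls_eq_zero_of_isSquare_unitRes hK _
    ((unitRes_mul hu hu').symm ▸ FiniteField.isSquare_mul_of_not_isSquare hsq hsq')
  rwa [kcls_mul, add_eq_zero_iff_eq_neg, MilnorK.neg_eq_self] at h

theorem kcls_mul_kcls_eq_zero_of_v_eq_zero (hK : ringChar K ≠ 2) {u u' : Fˣ}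
    (hu : D.v u = 0) (hu' : D.v u' = 0) : kcls u * kcls u' = 0 := by
  by_cases hsq : IsSquare (D.unitRes u hu)
  · rw [kcls_eq_zero_of_isSquare_unitRes hK hu hsq, zero_mul]
  by_cases hsq' : IsSquare (D.unitRes u' hu')
  · rw [kcls_eq_zero_of_isSquare_unitRes hK hu' hsq', mul_zero]
  rw [kcls_eq_of_not_isSquare_unitRes hK hu' hu hsq' hsq, kcls_mul_self]
  by_cases hm : IsSquare (-1 : K)
  · rw [kcls_eq_zero_of_isSquare_unitRes hK D.v_neg_one (by rwa [unitRes_neg_one]), mul_zero]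
  rw [kcls_eq_of_not_isSquare_unitRes hK hu D.v_neg_one hsq (by rwa [unitRes_neg_one])]
  obtain ⟨x, y, hxy⟩ := D.exists_sq_add_sq_eq_neg_one hK hm
  exact kcls_neg_one_mul_self_of_sq_add_sq hxy

theorem exists_kcls_mul_kcls_eq (hK : ringChar K ≠ 2) {π : Fˣ} (hπ : D.v π = 1) (a b : Fˣ) :
    ∃ w : Fˣ, D.v w = 0 ∧ kcls a * kcls b = kcls π * kcls w := by
  obtain ⟨u, hu, ha⟩ := exists_kcls_eq_zsmul_add hπ a
  obtain ⟨u', hu', hb⟩ := exists_kcls_eq_zsmul_add hπ b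
  set n := D.v a
  set m := D.v b
  refine ⟨(-1) ^ (n * m) * u' ^ n * u ^ m, ?_, ?_⟩
  · simp only [D.v_mul, D.v_zpow, D.v_neg_one, hu, hu']
    ring
  · simp only [ha, hb, kcls_mul, kcls_zpow, add_mul, mul_add, smul_mul_assoc, mul_smul_comm,
      kcls_mul_self π, kcls_mul_comm u π, kcls_mul_kcls_eq_zero_of_v_eq_zero hK hu hu', add_zero]
    module

theorem kcls_mul_kcls_mul_kcls_of_v_eq_zero (hK : ringChar K ≠ 2) {π : Fˣ} (hπ : D.v π = 1)
    {w : Fˣ} (hw : D.v w = 0) (c : Fˣ) : kcls π * kcls w * kcls c = 0 := by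
  obtain ⟨u, hu, hc⟩ := exists_kcls_eq_zsmul_add hπ c
  have hwπ : kcls π * kcls w * kcls π = 0 := by
    rw [mul_assoc, kcls_mul_comm w, ← mul_assoc, kcls_mul_self, mul_assoc,
      kcls_mul_kcls_eq_zero_of_v_eq_zero hK D.v_neg_one hw, mul_zero]
  rw [hc, mul_add, mul_smul_comm, hwπ, mul_assoc, kcls_mul_kcls_eq_zero_of_v_eq_zero hK hw hu,
    smul_zero, mul_zero, add_zero]

end

theorem kcls_mul_kcls_mul_kcls {F K : Type} [Field F] [Field K] [Fintype K]
    (D : PadicData F K) (hK : ringChar K ≠ 2) (a b c : Fˣ) :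
    kcls a * kcls b * kcls c = 0 := by
  obtain ⟨π, hπ⟩ := D.v_surj 1
  obtain ⟨w, hw, hab⟩ := exists_kcls_mul_kcls_eq hK hπ a b
  rw [hab, kcls_mul_kcls_mul_kcls_of_v_eq_zero hK hπ hw]

end PadicData

theorem milnor_vanish_high_degree_general {F K : Type} [Field F] [Field K] [Fintype K]
    (D : PadicData F K) (hodd : Odd (Fintype.card K)) :
    ∀ (n : ℕ), 3 ≤ n → ∀ a : Fin n → Fˣ,
      (List.ofFn (fun i => kcls (a i))).prod = 0 := by
  have hK : ringChar K ≠ 2 := fun h => by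
    have := FiniteField.even_card_iff_char_two.mp h
    rw [Nat.odd_iff] at hodd
    omega
  intro n hn
  induction n, hn using Nat.le_induction with
  | base =>
    intro a
    simp only [List.ofFn_succ, List.ofFn_zero, List.prod_cons, List.prod_nil, mul_one,
      ← mul_assoc]
    exact D.kcls_mul_kcls_mul_kcls hK _ _ _
  | succ m _ ih =>
    intro a
    rw [List.ofFn_succ, List.prod_cons, ih, mul_zero]

/-- mod 2 Milnor K-theory of `F` vanishes in degrees `≥ 3`. -/
theorem milnor_vanish_high_degree {F K : Type} [Field F] [CharZero F] [Field K] [Fintype K]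
    (D : PadicData F K) (hodd : Odd (Fintype.card K)) :
    ∀ (n : ℕ), 3 ≤ n → ∀ a : Fin n → Fˣ,
      (List.ofFn (fun i => kcls (a i))).prod = 0 :=
  milnor_vanish_high_degree_general D hodd
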